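/- arXiv:1112.1371 — 3 statements merged into one kernel-verified Lean document; each statement's English description precedes it below -/
import Mathlib

section
/- Let f be a homogeneous polynomial of degree kd + k - 1 in two variables over ℂ, where k ≥ 2, d ≥ 0. If for each k-th root of unity ξ, all partial derivatives of f of order ≤ d vanish at the point (1, ξ), then f is identically zero. -/
open MvPolynomial

/-- All partial derivatives of `f` of total order `≤ d` vanish at the point `p`. -/
def derivsVanish {N : ℕ} (f : MvPolynomial (Fin N) ℂ) (d : ℕ) (p : Fin N → ℂ) : Prop :=
  ∀ L : List (Fin N), L.length ≤ d →
    MvPolynomial.eval p (L.foldr (fun i g => MvPolynomial.pderiv i g) f) = 0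

/-! Put `g(x) = f(1, x)`. Setting `x₀ = 1` turns `∂/∂x₁` into `d/dx`, so every `k`-th root
of unity is a root of `g` of multiplicity `> d`; a nonzero `g` would then have degree
`≥ k(d + 1)`, more than `kd + k - 1`. Hence `g = 0`, and a binary form is determined by its
dehomogenization. -/

open scoped Polynomial
open Polynomial (derivative)

theorem List.foldr_replicate {α β : Type*} (f : α → β → β) (a : α) (b : β) (n : ℕ) :
    (List.replicate n a).foldr f b = (f a)^[n] b := by
  induction n with
  | zero => rfl
  | succ n ih => rw [List.replicate_succ, List.foldr_cons, ih, Function.iterate_succ_apply']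

namespace MvPolynomial

variable {R σ : Type*} [CommSemiring R]

theorem aeval_pderiv_eq_derivative_aeval (v : σ → R[X]) (i : σ) (hi : v i = Polynomial.X)
    (hv : ∀ j ≠ i, derivative (v j) = 0) (p : MvPolynomial σ R) :
    aeval v (pderiv i p) = derivative (aeval v p) := by
  induction p using MvPolynomial.induction_on with
  | C a => simp
  | add p q hp hq => simp [hp, hq]
  | mul_X p j hp =>
    by_cases hj : j = i
    · subst hj
      simp only [Derivation.leibniz, pderiv_X_self, smul_eq_mul, mul_one, map_add, map_mul, aeval_X,
        hi, hp, Polynomial.derivative_mul, Polynomial.derivative_X]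
      ring
    · simp only [Derivation.leibniz, pderiv_X_of_ne hj, smul_eq_mul, mul_zero, zero_add, map_mul,
        aeval_X, hp, Polynomial.derivative_mul, hv j hj, add_zero]
      ring

theorem aeval_iterate_pderiv_eq_iterate_derivative_aeval (v : σ → R[X]) (i : σ)
    (hi : v i = Polynomial.X) (hv : ∀ j ≠ i, derivative (v j) = 0) (n : ℕ)
    (p : MvPolynomial σ R) :
    aeval v ((pderiv i)^[n] p) = derivative^[n] (aeval v p) :=
  Function.Semiconj.iterate_right (aeval_pderiv_eq_derivative_aeval v i hi hv) n p

theorem natDegree_aeval_le_totalDegree (v : σ → R[X]) (hv : ∀ i, (v i).natDegree ≤ 1)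
    (p : MvPolynomial σ R) : (aeval v p).natDegree ≤ p.totalDegree := by
  conv_lhs => rw [p.as_sum, map_sum]
  refine Polynomial.natDegree_sum_le_of_forall_le _ _ fun m hm => ?_
  rw [aeval_monomial, Polynomial.algebraMap_eq]
  refine (Polynomial.natDegree_C_mul_le _ _).trans ?_
  calc (m.prod fun i e => v i ^ e).natDegree
      ≤ m.sum fun i e => e * (v i).natDegree := by
        refine (Polynomial.natDegree_prod_le _ _).trans (Finset.sum_le_sum fun i _ => ?_)
        exact Polynomial.natDegree_pow_le
    _ ≤ m.sum fun _ e => e :=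
        Finset.sum_le_sum fun i _ => mul_le_of_le_one_right (Nat.zero_le _) (hv i)
    _ ≤ p.totalDegree := le_totalDegree hm

theorem eval_aeval_one_X (p : MvPolynomial (Fin 2) R) (t : R) :
    (aeval ![1, Polynomial.X] p).eval t = MvPolynomial.eval ![1, t] p := by
  have hpoint :
      (fun i => Polynomial.aeval t ((![1, Polynomial.X] : Fin 2 → R[X]) i)) = ![1, t] := by
    funext i
    fin_cases i <;> simp
  rw [← Polynomial.coe_aeval_eq_eval, comp_aeval_apply, hpoint]
  rfl

theorem IsHomogeneous.eq_zero_of_aeval_one_X_eq_zero {p : MvPolynomial (Fin 2) R} {n : ℕ}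
    (hp : p.IsHomogeneous n) (h : MvPolynomial.aeval (![1, Polynomial.X] : Fin 2 → R[X]) p = 0) :
    p = 0 := by
  -- Mathlib dehomogenizes at `x₁ = 1`, hence the swap of the variables.
  set swap := Equiv.swap (0 : Fin 2) 1
  have hswap : MvPolynomial.aeval (![Polynomial.X, 1] : Fin 2 → R[X]) (rename swap p) = 0 := by
    have hcomp : (![Polynomial.X, 1] : Fin 2 → R[X]) ∘ swap = ![1, Polynomial.X] := by
      funext i
      fin_cases i <;> rfl
    rw [aeval_rename, hcomp, h]
  have := Polynomial.homogenize_eq_of_isHomogeneous hp.rename_isHomogeneous hswap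
  rw [Polynomial.homogenize_zero, eq_comm, ← map_zero (rename swap)] at this
  exact rename_injective swap swap.injective this

end MvPolynomial

theorem Polynomial.mul_card_le_natDegree_of_le_rootMultiplicity {R : Type*} [CommRing R]
    [IsDomain R] {p : R[X]} {s : Finset R} {n : ℕ}
    (h : ∀ a ∈ s, n ≤ p.rootMultiplicity a) : n * s.card ≤ p.natDegree := by
  classical
  have hle : n • s.val ≤ p.roots := by
    refine Multiset.le_iff_count.2 fun a => ?_
    rw [Multiset.count_nsmul, count_roots]
    by_cases ha : a ∈ s
    · rw [Multiset.count_eq_one_of_mem s.nodup ha, mul_one]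
      exact h a ha
    · simp [Multiset.count_eq_zero_of_notMem ha]
  calc n * s.card = Multiset.card (n • s.val) := by simp
    _ ≤ Multiset.card p.roots := Multiset.card_le_card hle
    _ ≤ p.natDegree := p.card_roots'

theorem derivsVanish.isRoot_iterate_derivative_aeval {f : MvPolynomial (Fin 2) ℂ} {d : ℕ}
    {t : ℂ} (h : derivsVanish f d ![1, t]) {m : ℕ} (hm : m ≤ d) :
    (derivative^[m] (aeval ![1, Polynomial.X] f)).IsRoot t := by
  have hvanish := h (List.replicate m 1) (by simpa using hm)
  rw [List.foldr_replicate] at hvanish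
  rwa [← aeval_iterate_pderiv_eq_iterate_derivative_aeval ![1, Polynomial.X] 1 rfl (by simp),
    Polynomial.IsRoot, eval_aeval_one_X]

/-- Let `f` be a homogeneous polynomial of degree `kd + k - 1` in two variables over `ℂ`,
with `k ≥ 2`, `d ≥ 0`. If for each `k`-th root of unity `ξ` all partial derivatives of `f`
of order `≤ d` vanish at `(1, ξ)`, then `f = 0`. -/
theorem binary_form_vanishing_at_roots_of_unity (k d : ℕ) (hk : 2 ≤ k)
    (f : MvPolynomial (Fin 2) ℂ) (hf : f.IsHomogeneous (k * d + k - 1))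
    (h : ∀ ξ : ℂ, ξ ^ k = 1 → derivsVanish f d ![1, ξ]) :
    f = 0 := by
  refine hf.eq_zero_of_aeval_one_X_eq_zero (by_contra fun hg => ?_)
  have hk0 : 0 < k := by omega
  have hmult : ∀ ξ ∈ Polynomial.nthRootsFinset k (1 : ℂ),
      d + 1 ≤ (aeval ![1, Polynomial.X] f).rootMultiplicity ξ := fun ξ hξ =>
    Polynomial.lt_rootMultiplicity_of_isRoot_iterate_derivative hg fun _ hm =>
      (h ξ ((Polynomial.mem_nthRootsFinset hk0 1).1 hξ)).isRoot_iterate_derivative_aeval hm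
  have hroots := Polynomial.mul_card_le_natDegree_of_le_rootMultiplicity hmult
  rw [(Complex.isPrimitiveRoot_exp k hk0.ne').card_nthRootsFinset] at hroots
  have hdeg := (natDegree_aeval_le_totalDegree ![1, Polynomial.X]
    (by simp [Fin.forall_fin_two]) f).trans hf.totalDegree_le
  have hexpand : (d + 1) * k = k * d + k := by ring
  omega
end

section
/- Let k ≥ 2 and n ≥ 1. Any form f of degree kd + k - 1 in n+1 complex variables all of whose partial derivatives of order ≤ d vanish at each of the k^n points (1, ξ_{i₁}, …, ξ_{iₙ}) (where the ξ_{iⱼ} range over all k-th roots of unity) is identically zero. -/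
/-!
Setting `x₀ = 1` turns `f` into a polynomial `g` of degree `< k(d+1)` in `n` variables that
vanishes to order `d + 1` at every point of `μₖⁿ`; since `f` is homogeneous, `g = 0` forces
`f = 0`. Averaging the rotations `g(ζ^c x)` against the characters of `(ℤ/k)ⁿ` isolates the
monomials of `g` whose exponents lie in one residue class mod `k`. That part still vanishes to
order `d + 1` at `(1, …, 1)` and has the form `x^r G(x^k)` with `deg G ≤ d`. After the
translation `x = 1 + y` it becomes `(1 + y)^r G₁((1 + y)^k - 1)` with `G₁ = G(1 + y)`; its
component in the lowest degree `m ≤ d` of `G₁` is `k^m` times that of `G₁`, hence nonzero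
unless `G = 0`.

Vanishing to order `m` at the origin is expressed as membership in `idealOfVars ^ m`.
-/

open MvPolynomial

namespace MvPolynomial

variable {σ τ R : Type*}

section CommSemiring

variable [CommSemiring R]

lemma eval_aeval (s : σ → MvPolynomial τ R) (q : τ → R) (f : MvPolynomial σ R) :
    eval q (aeval s f) = eval (fun j => eval q (s j)) f := by
  rw [← aeval_eq_eval, comp_aeval_apply]
  rfl

noncomputable def iteratedPDeriv (L : List σ) : MvPolynomial σ R →ₗ[R] MvPolynomial σ R :=
  L.foldr (fun i φ => (pderiv i).toLinearMap ∘ₗ φ) LinearMap.id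

@[simp]
lemma iteratedPDeriv_nil (f : MvPolynomial σ R) : iteratedPDeriv [] f = f := rfl

@[simp]
lemma iteratedPDeriv_cons (i : σ) (L : List σ) (f : MvPolynomial σ R) :
    iteratedPDeriv (i :: L) f = pderiv i (iteratedPDeriv L f) := rfl

lemma iteratedPDeriv_eq_foldr (L : List σ) (f : MvPolynomial σ R) :
    iteratedPDeriv L f = L.foldr (fun i g => pderiv i g) f := by
  induction L with
  | nil => rfl
  | cons i L ih => rw [iteratedPDeriv_cons, ih, List.foldr_cons]

lemma pderiv_aeval_of_pderiv_eq [DecidableEq σ] {s : σ → MvPolynomial τ R} (ι : τ → σ)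
    (c : τ → R) (hs : ∀ i j, pderiv i (s j) = if j = ι i then C (c i) else 0) (i : τ)
    (f : MvPolynomial σ R) :
    pderiv i (aeval s f) = C (c i) * aeval s (pderiv (ι i) f) := by
  induction f using MvPolynomial.induction_on with
  | C a => simp
  | add p q hp hq => simp only [map_add, hp, hq, mul_add]
  | mul_X p j hp =>
    simp only [map_mul, aeval_X, Derivation.leibniz, hp, hs, smul_eq_mul, map_add]
    by_cases hj : j = ι i
    · subst hj
      simp only [if_pos, pderiv_X_self, map_one]
      ring
    · simp only [hj, if_false, pderiv_X_of_ne hj, map_zero]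
      ring

lemma iteratedPDeriv_aeval_of_pderiv_eq [DecidableEq σ] {s : σ → MvPolynomial τ R} (ι : τ → σ)
    (c : τ → R) (hs : ∀ i j, pderiv i (s j) = if j = ι i then C (c i) else 0) (L : List τ)
    (f : MvPolynomial σ R) :
    iteratedPDeriv L (aeval s f) = C (L.map c).prod * aeval s (iteratedPDeriv (L.map ι) f) := by
  induction L with
  | nil => simp
  | cons i L ih =>
    simp only [iteratedPDeriv_cons, ih, pderiv_C_mul, pderiv_aeval_of_pderiv_eq ι c hs,
      List.map_cons, List.prod_cons, map_mul]
    ring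

lemma coeff_aeval_C_mul_X (z : σ → R) (f : MvPolynomial σ R) (e : σ →₀ ℕ) :
    coeff e (aeval (fun i => C (z i) * X i) f) = (e.prod fun i n => z i ^ n) * coeff e f := by
  classical
  induction f using MvPolynomial.induction_on' with
  | monomial u c =>
    have hu : aeval (fun i => C (z i) * X i) (monomial u c) =
        monomial u ((u.prod fun i n => z i ^ n) * c) := by
      rw [aeval_monomial, monomial_eq]
      simp only [mul_pow, Finsupp.prod_mul, ← map_pow, ← map_finsuppProd, algebraMap_eq, map_mul]
      ring
    rw [hu, coeff_monomial, coeff_monomial]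
    split_ifs with h
    · rw [h]
    · rw [mul_zero]
  | add p q hp hq => simp only [map_add, coeff_add, hp, hq, mul_add]

lemma aeval_C_mul_X_eq_zero_iff [IsDomain R] {z : σ → R} (hz : ∀ i, z i ≠ 0)
    {f : MvPolynomial σ R} : aeval (fun i => C (z i) * X i) f = 0 ↔ f = 0 := by
  refine ⟨fun h => ?_, fun h => by rw [h, map_zero]⟩
  ext e
  have he := congr_arg (coeff e) h
  rw [coeff_aeval_C_mul_X, coeff_zero, mul_eq_zero] at he
  exact he.resolve_left (Finsupp.prod_ne_zero_iff.2 fun i _ => pow_ne_zero _ (hz i))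

lemma totalDegree_aeval_le {s : σ → MvPolynomial τ R} (hs : ∀ i, (s i).totalDegree ≤ 1)
    (F : MvPolynomial σ R) : (aeval s F).totalDegree ≤ F.totalDegree := by
  conv_lhs => rw [F.as_sum]
  rw [map_sum]
  refine (totalDegree_finsetSum _ _).trans (Finset.sup_le fun e he => ?_)
  rw [aeval_monomial, algebraMap_eq, Finsupp.prod]
  refine (totalDegree_mul _ _).trans ?_
  rw [totalDegree_C, zero_add]
  refine (totalDegree_finsetProd _ _).trans ?_
  calc ∑ i ∈ e.support, (s i ^ e i).totalDegree ≤ ∑ i ∈ e.support, e i * 1 :=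
        Finset.sum_le_sum fun i _ => (totalDegree_pow _ _).trans (Nat.mul_le_mul_left _ (hs i))
    _ = e.degree := by simp [Finsupp.degree_apply]
    _ ≤ F.totalDegree := le_totalDegree he

lemma exists_eq_monomial_mul_expand_of_modEq {f : MvPolynomial σ R} {k : ℕ} (a : σ →₀ ℕ)
    (hf : ∀ e ∈ f.support, ∀ i, e i ≡ a i [MOD k]) :
    ∃ r G, f = monomial r 1 * expand k G := by
  refine ⟨a.mapRange (· % k) (Nat.zero_mod k),
    ∑ e ∈ f.support, monomial (e.mapRange (· / k) (Nat.zero_div k)) (coeff e f), ?_⟩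
  conv_lhs => rw [f.as_sum]
  rw [map_sum, Finset.mul_sum]
  refine Finset.sum_congr rfl fun e he => ?_
  have hae : a.mapRange (· % k) (Nat.zero_mod k) + k • e.mapRange (· / k) (Nat.zero_div k) = e := by
    ext i
    simp only [Finsupp.add_apply, Finsupp.smul_apply, Finsupp.mapRange_apply, smul_eq_mul]
    rw [← hf e he i, Nat.mod_add_div]
  rw [expand_monomial, monomial_mul, one_mul, hae]

lemma aeval_cons_one_X_monomial {n : ℕ} (e : Fin (n + 1) →₀ ℕ) (c : R) :
    aeval (Fin.cons 1 X : Fin (n + 1) → MvPolynomial (Fin n) R) (monomial e c) =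
      monomial e.tail c := by
  rw [aeval_monomial, Finsupp.prod_fintype _ _ fun _ => pow_zero _, Fin.prod_univ_succ,
    monomial_eq, Finsupp.prod_fintype _ _ fun _ => pow_zero _]
  simp [Finsupp.tail_apply]

lemma _root_.Finsupp.degree_eq_add_degree_tail {n : ℕ} (e : Fin (n + 1) →₀ ℕ) :
    e.degree = e 0 + e.tail.degree := by
  simp [Finsupp.degree_eq_sum, Fin.sum_univ_succ, Finsupp.tail_apply]

lemma IsHomogeneous.eq_zero_of_aeval_cons_one_X_eq_zero {n D : ℕ}
    {f : MvPolynomial (Fin (n + 1)) R} (hf : f.IsHomogeneous D)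
    (h : MvPolynomial.aeval (Fin.cons 1 X : Fin (n + 1) → MvPolynomial (Fin n) R) f = 0) :
    f = 0 := by
  ext e
  rw [coeff_zero]
  by_cases he : e.degree = D
  swap
  · exact hf.coeff_eq_zero he
  have htail : ∀ m ∈ f.support, m.tail = e.tail → m = e := fun m hm hme => by
    have hm' : m.degree = D := by
      rw [Finsupp.degree_eq_weight_one]
      exact hf (mem_support_iff.1 hm)
    rw [Finsupp.degree_eq_add_degree_tail, hme] at hm'
    rw [Finsupp.degree_eq_add_degree_tail] at he
    rw [← Finsupp.cons_tail m, ← Finsupp.cons_tail e, hme, show m 0 = e 0 by omega]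
  have hcoeff := congr_arg (coeff e.tail) h
  rw [f.as_sum, map_sum, coeff_sum, coeff_zero] at hcoeff
  simp only [aeval_cons_one_X_monomial, coeff_monomial] at hcoeff
  rwa [Finset.sum_eq_single e (fun m hm hme => if_neg fun h => hme (htail m hm h))
    (fun he' => by simp [notMem_support_iff.1 he']), if_pos rfl] at hcoeff

end CommSemiring

lemma coeff_iteratedPDeriv_eq_zero_iff [CommRing R] [IsDomain R] [CharZero R] [DecidableEq σ]
    (L : List σ) (f : MvPolynomial σ R) (e : σ →₀ ℕ) :
    coeff e (iteratedPDeriv L f) = 0 ↔ coeff (e + Multiset.toFinsupp (L : Multiset σ)) f = 0 := by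
  induction L generalizing e with
  | nil => simp
  | cons i L ih =>
    rw [iteratedPDeriv_cons, coeff_pderiv, mul_eq_zero, or_iff_left (Nat.cast_add_one_ne_zero _),
      ih, ← Multiset.cons_coe, ← Multiset.singleton_add, Multiset.toFinsupp_add,
      Multiset.toFinsupp_singleton, add_assoc]

section InitialForm

variable [CommRing R]

lemma monomial_mem_pow_idealOfVars (e : σ →₀ ℕ) (c : R) :
    monomial e c ∈ idealOfVars σ R ^ e.degree := by
  classical
  rw [mem_pow_idealOfVars_iff]
  intro x hx
  rw [Finset.mem_singleton.1 (support_monomial_subset hx)]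

lemma aeval_mem_pow_idealOfVars {s : σ → MvPolynomial τ R} (hs : ∀ i, s i ∈ idealOfVars τ R)
    {m : ℕ} {F : MvPolynomial σ R} (hF : F ∈ idealOfVars σ R ^ m) :
    aeval s F ∈ idealOfVars τ R ^ m := by
  have hle : (idealOfVars σ R).map (aeval s) ≤ idealOfVars τ R := by
    rw [Ideal.map_span, Ideal.span_le]
    rintro _ ⟨_, ⟨i, rfl⟩, rfl⟩
    simpa using hs i
  have hmap := Ideal.mem_map_of_mem (aeval s : MvPolynomial σ R →ₐ[R] MvPolynomial τ R) hF
  rw [Ideal.map_pow] at hmap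
  exact Ideal.pow_right_mono hle m hmap

lemma homogeneousComponent_eq_zero_of_mem_pow {m n : ℕ} (hmn : m < n) {A : MvPolynomial σ R}
    (hA : A ∈ idealOfVars σ R ^ n) : homogeneousComponent m A = 0 := by
  ext e
  rw [coeff_homogeneousComponent, coeff_zero]
  split_ifs with he
  · exact (mem_pow_idealOfVars_iff' n A).1 hA e (he ▸ hmn)
  · rfl

lemma homogeneousComponent_mem_pow (m : ℕ) (A : MvPolynomial σ R) :
    homogeneousComponent m A ∈ idealOfVars σ R ^ m := by
  rw [mem_pow_idealOfVars_iff]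
  intro e he
  rw [support_homogeneousComponent, Finset.mem_filter] at he
  exact he.2.ge

lemma sub_homogeneousComponent_mem_pow {m : ℕ} {A : MvPolynomial σ R}
    (hA : A ∈ idealOfVars σ R ^ m) : A - homogeneousComponent m A ∈ idealOfVars σ R ^ (m + 1) := by
  rw [mem_pow_idealOfVars_iff'] at hA ⊢
  intro e he
  rw [coeff_sub, coeff_homogeneousComponent]
  split_ifs with h
  · exact sub_self _
  · rw [sub_zero]
    exact hA e (by omega)

lemma homogeneousComponent_mul_of_mem_pow {a b : ℕ} {A B : MvPolynomial σ R}
    (hA : A ∈ idealOfVars σ R ^ a) (hB : B ∈ idealOfVars σ R ^ b) :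
    homogeneousComponent (a + b) (A * B) =
      homogeneousComponent a A * homogeneousComponent b B := by
  have hsplit : A * B = homogeneousComponent a A * homogeneousComponent b B +
      (homogeneousComponent a A * (B - homogeneousComponent b B) +
        (A - homogeneousComponent a A) * B) := by ring
  have h₁ : homogeneousComponent a A * (B - homogeneousComponent b B) ∈
      idealOfVars σ R ^ (a + b + 1) := by
    rw [add_assoc, pow_add]
    exact Ideal.mul_mem_mul (homogeneousComponent_mem_pow a A) (sub_homogeneousComponent_mem_pow hB)
  have h₂ : (A - homogeneousComponent a A) * B ∈ idealOfVars σ R ^ (a + b + 1) := by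
    rw [add_right_comm, pow_add]
    exact Ideal.mul_mem_mul (sub_homogeneousComponent_mem_pow hA) hB
  rw [hsplit, map_add, map_add, homogeneousComponent_eq_zero_of_mem_pow (Nat.lt_succ_self _) h₁,
    homogeneousComponent_eq_zero_of_mem_pow (Nat.lt_succ_self _) h₂, add_zero, add_zero,
    homogeneousComponent_eq_self ((homogeneousComponent_isHomogeneous a A).mul
      (homogeneousComponent_isHomogeneous b B))]

lemma homogeneousComponent_pow_of_mem_pow {a : ℕ} {A : MvPolynomial σ R}
    (hA : A ∈ idealOfVars σ R ^ a) (t : ℕ) :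
    homogeneousComponent (a * t) (A ^ t) = homogeneousComponent a A ^ t := by
  induction t with
  | zero => simp
  | succ t ih =>
    have hAt : A ^ t ∈ idealOfVars σ R ^ (a * t) := pow_mul (idealOfVars σ R) a t ▸
      Ideal.pow_mem_pow hA t
    rw [pow_succ, Nat.mul_succ, homogeneousComponent_mul_of_mem_pow hAt hA, ih, pow_succ]

lemma homogeneousComponent_prod_of_mem_pow {ι : Type*} (s : Finset ι)
    {A : ι → MvPolynomial σ R} {m : ι → ℕ} (h : ∀ i ∈ s, A i ∈ idealOfVars σ R ^ m i) :
    homogeneousComponent (∑ i ∈ s, m i) (∏ i ∈ s, A i) =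
      ∏ i ∈ s, homogeneousComponent (m i) (A i) := by
  classical
  induction s using Finset.induction_on with
  | empty => simp
  | insert x s hx ih =>
    have hs : ∏ i ∈ s, A i ∈ idealOfVars σ R ^ ∑ i ∈ s, m i := by
      rw [← Finset.prod_pow_eq_pow_sum]
      exact Ideal.prod_mem_prod fun i hi => h i (Finset.mem_insert_of_mem hi)
    rw [Finset.sum_insert hx, Finset.prod_insert hx, Finset.prod_insert hx,
      homogeneousComponent_mul_of_mem_pow (h x (Finset.mem_insert_self x s)) hs,
      ih fun i hi => h i (Finset.mem_insert_of_mem hi)]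

lemma homogeneousComponent_aeval_of_mem_pow {s : σ → MvPolynomial τ R}
    (hs : ∀ i, s i ∈ idealOfVars τ R) {m : ℕ} {F : MvPolynomial σ R}
    (hF : F ∈ idealOfVars σ R ^ m) :
    homogeneousComponent m (aeval s F) =
      aeval (fun i => homogeneousComponent 1 (s i)) (homogeneousComponent m F) := by
  rw [mem_pow_idealOfVars_iff] at hF
  conv_lhs => rw [F.as_sum]
  conv_rhs => rw [F.as_sum]
  simp only [map_sum]
  refine Finset.sum_congr rfl fun e he => ?_
  rcases (hF e he).eq_or_lt with hm | hm
  · have hsi : ∀ i ∈ e.support, s i ^ e i ∈ idealOfVars τ R ^ (1 * e i) := fun i _ => by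
      rw [one_mul]
      exact Ideal.pow_mem_pow (by simpa using hs i) _
    have hdeg : m = ∑ i ∈ e.support, 1 * e i := by simp [hm, Finsupp.degree_apply]
    rw [homogeneousComponent_eq_self (isHomogeneous_monomial _ hm.symm), aeval_monomial,
      aeval_monomial, Finsupp.prod, Finsupp.prod, algebraMap_eq, homogeneousComponent_C_mul, hdeg,
      homogeneousComponent_prod_of_mem_pow _ hsi]
    simp only [homogeneousComponent_pow_of_mem_pow (pow_one (idealOfVars τ R) ▸ hs _)]
  · rw [homogeneousComponent_eq_zero_of_mem_pow hm (monomial_mem_pow_idealOfVars e _),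
      homogeneousComponent_eq_zero_of_mem_pow hm
        (aeval_mem_pow_idealOfVars hs (monomial_mem_pow_idealOfVars e _)), map_zero]

lemma exists_mem_pow_idealOfVars_homogeneousComponent_ne_zero {F : MvPolynomial σ R}
    (hF : F ≠ 0) :
    ∃ m ≤ F.totalDegree, F ∈ idealOfVars σ R ^ m ∧ homogeneousComponent m F ≠ 0 := by
  classical
  have hex : ∃ m, homogeneousComponent m F ≠ 0 := by
    by_contra! h
    apply hF
    rw [← sum_homogeneousComponent F]
    simp [h]
  refine ⟨Nat.find hex, ?_, ?_, Nat.find_spec hex⟩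
  · by_contra! hlt
    exact Nat.find_spec hex (homogeneousComponent_eq_zero _ _ hlt)
  · rw [mem_pow_idealOfVars_iff']
    intro e he
    have hzero := congr_arg (coeff e) (not_not.1 (Nat.find_min hex he))
    rwa [coeff_homogeneousComponent, if_pos rfl, coeff_zero] at hzero

lemma X_add_one_pow_sub_one_eq (i : σ) (k : ℕ) :
    ((X i + 1) ^ k - 1 : MvPolynomial σ R) = (∑ j ∈ Finset.range k, (X i + 1) ^ j) * X i := by
  have h := geom_sum_mul (X i + 1 : MvPolynomial σ R) k
  rw [add_sub_cancel_right] at h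
  exact h.symm

lemma X_add_one_pow_sub_one_mem_idealOfVars (i : σ) (k : ℕ) :
    ((X i + 1) ^ k - 1 : MvPolynomial σ R) ∈ idealOfVars σ R := by
  rw [X_add_one_pow_sub_one_eq]
  exact Ideal.mul_mem_left _ _ (Ideal.subset_span ⟨i, rfl⟩)

lemma homogeneousComponent_one_X_add_one_pow_sub_one (i : σ) (k : ℕ) :
    homogeneousComponent 1 ((X i + 1) ^ k - 1 : MvPolynomial σ R) = C (k : R) * X i := by
  have hX : (X i : MvPolynomial σ R) ∈ idealOfVars σ R ^ 1 := by
    rw [pow_one]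
    exact Ideal.subset_span ⟨i, rfl⟩
  rw [X_add_one_pow_sub_one_eq, ← zero_add 1,
    homogeneousComponent_mul_of_mem_pow (by simp) hX, homogeneousComponent_zero,
    homogeneousComponent_eq_self (isHomogeneous_X R i), ← constantCoeff_eq]
  simp

lemma homogeneousComponent_aeval_X_add_one_pow_sub_one {k m : ℕ} {F : MvPolynomial σ R}
    (hF : F ∈ idealOfVars σ R ^ m) :
    homogeneousComponent m (aeval (fun i => (X i + 1) ^ k - 1) F) =
      aeval (fun i => C (k : R) * X i) (homogeneousComponent m F) := by
  rw [homogeneousComponent_aeval_of_mem_pow (fun i => X_add_one_pow_sub_one_mem_idealOfVars i k) hF]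
  simp only [homogeneousComponent_one_X_add_one_pow_sub_one]

lemma aeval_X_add_one_monomial_mul_expand (a : σ →₀ ℕ) (k : ℕ) (G : MvPolynomial σ R) :
    aeval (fun j => X j + 1 : σ → MvPolynomial σ R) (monomial a 1 * expand k G) =
      aeval (fun j => X j + 1 : σ → MvPolynomial σ R) (monomial a (1 : R)) *
        aeval (fun i => (X i + 1) ^ k - 1 : σ → MvPolynomial σ R)
          (aeval (fun j => X j + 1 : σ → MvPolynomial σ R) G) := by
  rw [map_mul, aeval_expand, comp_aeval_apply]
  congr 3
  funext i
  simp


lemma homogeneousComponent_aeval_X_add_one_monomial_mul_expand (a : σ →₀ ℕ) (k : ℕ)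
    {m : ℕ} {G : MvPolynomial σ R}
    (hG : aeval (fun j => X j + 1 : σ → MvPolynomial σ R) G ∈ idealOfVars σ R ^ m) :
    homogeneousComponent m
        (aeval (fun j => X j + 1 : σ → MvPolynomial σ R) (monomial a 1 * expand k G)) =
      aeval (fun i => C (k : R) * X i)
        (homogeneousComponent m (aeval (fun j => X j + 1 : σ → MvPolynomial σ R) G)) := by
  have hconst : homogeneousComponent 0
      (aeval (fun j => X j + 1 : σ → MvPolynomial σ R) (monomial a (1 : R))) = 1 := by
    rw [homogeneousComponent_zero, ← constantCoeff_eq, ← eval_zero, eval_aeval]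
    simp [eval_monomial, Finsupp.prod]
  rw [aeval_X_add_one_monomial_mul_expand, ← zero_add m,
    homogeneousComponent_mul_of_mem_pow (by simp)
      (aeval_mem_pow_idealOfVars (fun i => X_add_one_pow_sub_one_mem_idealOfVars i k) hG),
    hconst, one_mul, zero_add, homogeneousComponent_aeval_X_add_one_pow_sub_one hG]

end InitialForm

end MvPolynomial

theorem IsPrimitiveRoot.sum_range_pow_mul_inv_pow {K : Type*} [Field K] {ζ : K} {k : ℕ}
    (hζ : IsPrimitiveRoot ζ k) (e a : ℕ) :
    ∑ j ∈ Finset.range k, (ζ ^ j) ^ e * ((ζ ^ j) ^ a)⁻¹ = if e ≡ a [MOD k] then (k : K) else 0 := by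
  rcases Nat.eq_zero_or_pos k with rfl | hk
  · simp
  have hζa : ζ ^ a ≠ 0 := pow_ne_zero _ (hζ.ne_zero hk.ne')
  have hpow : ∀ j, (ζ ^ j) ^ e * ((ζ ^ j) ^ a)⁻¹ = (ζ ^ e * (ζ ^ a)⁻¹) ^ j := fun j => by
    rw [mul_pow, inv_pow, ← pow_mul, ← pow_mul, ← pow_mul, ← pow_mul, mul_comm j, mul_comm j]
  have hiff : ζ ^ e = ζ ^ a ↔ e ≡ a [MOD k] :=
    hζ.eq_orderOf ▸ (hζ.isOfFinOrder hk.ne').pow_eq_pow_iff_modEq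
  simp only [hpow]
  split_ifs with h
  · simp [hiff.2 h, mul_inv_cancel₀ hζa]
  · have hx : ζ ^ e * (ζ ^ a)⁻¹ ≠ 1 := fun hx => h (hiff.1 ((mul_inv_eq_one₀ hζa).1 hx))
    rw [geom_sum_eq hx, ← hpow, hζ.pow_eq_one, one_pow, one_pow, inv_one, mul_one, sub_self,
      zero_div]

namespace MvPolynomial

variable {σ K : Type*} [Fintype σ] [DecidableEq σ] [Field K]

/-- Up to the factor `k ^ card σ`, the part of `g` whose exponents are congruent to `a`
modulo `k`. -/
noncomputable def rootsOfUnityAverage (ζ : K) (k : ℕ) (a : σ → ℕ) (g : MvPolynomial σ K) :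
    MvPolynomial σ K :=
  ∑ c : σ → Fin k, (∏ i, ((ζ ^ (c i : ℕ)) ^ a i)⁻¹) • aeval (fun i => C (ζ ^ (c i : ℕ)) * X i) g

lemma coeff_rootsOfUnityAverage {ζ : K} {k : ℕ} (hζ : IsPrimitiveRoot ζ k) (a : σ → ℕ)
    (g : MvPolynomial σ K) (e : σ →₀ ℕ) :
    coeff e (rootsOfUnityAverage ζ k a g) =
      if ∀ i, e i ≡ a i [MOD k] then (k : K) ^ Fintype.card σ * coeff e g else 0 := by
  have hterm : ∀ c : σ → Fin k,
      coeff e ((∏ i, ((ζ ^ (c i : ℕ)) ^ a i)⁻¹) • aeval (fun i => C (ζ ^ (c i : ℕ)) * X i) g) =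
        (∏ i, (ζ ^ (c i : ℕ)) ^ e i * ((ζ ^ (c i : ℕ)) ^ a i)⁻¹) * coeff e g := fun c => by
    rw [coeff_smul, coeff_aeval_C_mul_X, Finsupp.prod_fintype _ _ fun _ => pow_zero _,
      smul_eq_mul, ← mul_assoc, ← Finset.prod_mul_distrib]
    simp only [mul_comm]
  rw [rootsOfUnityAverage, coeff_sum, Finset.sum_congr rfl fun c _ => hterm c, ← Finset.sum_mul,
    ← Fintype.prod_sum fun i (j : Fin k) => (ζ ^ (j : ℕ)) ^ e i * ((ζ ^ (j : ℕ)) ^ a i)⁻¹,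
    Finset.prod_congr rfl fun i _ => (Fin.sum_univ_eq_sum_range
      (fun j => (ζ ^ j) ^ e i * ((ζ ^ j) ^ a i)⁻¹) k).trans (hζ.sum_range_pow_mul_inv_pow _ _),
    Fintype.prod_ite_zero, Finset.prod_const, Finset.card_univ]
  split_ifs <;> simp

end MvPolynomial

open MvPolynomial

lemma derivsVanish_iff {N : ℕ} (f : MvPolynomial (Fin N) ℂ) (d : ℕ) (p : Fin N → ℂ) :
    derivsVanish f d p ↔ ∀ L : List (Fin N), L.length ≤ d → eval p (iteratedPDeriv L f) = 0 := by
  simp only [derivsVanish, iteratedPDeriv_eq_foldr]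

section DerivsVanish

variable {N M d : ℕ}

lemma derivsVanish_sum_smul {ι : Type*} (s : Finset ι) (w : ι → ℂ)
    {f : ι → MvPolynomial (Fin N) ℂ} {p : Fin N → ℂ}
    (h : ∀ x ∈ s, derivsVanish (f x) d p) : derivsVanish (∑ x ∈ s, w x • f x) d p := by
  rw [derivsVanish_iff]
  intro L hL
  simp only [map_sum, map_smul, smul_eval]
  exact Finset.sum_eq_zero fun x hx => by rw [(derivsVanish_iff _ _ _).1 (h x hx) L hL, mul_zero]

lemma derivsVanish_aeval {s : Fin N → MvPolynomial (Fin M) ℂ} (ι : Fin M → Fin N)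
    (c : Fin M → ℂ) (hs : ∀ i j, pderiv i (s j) = if j = ι i then C (c i) else 0)
    {f : MvPolynomial (Fin N) ℂ} {q : Fin M → ℂ}
    (h : derivsVanish f d fun j => eval q (s j)) : derivsVanish (aeval s f) d q := by
  rw [derivsVanish_iff] at h ⊢
  intro L hL
  rw [iteratedPDeriv_aeval_of_pderiv_eq ι c hs, eval_mul, eval_aeval, h _ (by simpa using hL),
    mul_zero]

lemma derivsVanish_aeval_X_add_C {f : MvPolynomial (Fin N) ℂ} {p : Fin N → ℂ}
    (h : derivsVanish f d p) : derivsVanish (aeval (fun j => X j + C (p j)) f) d 0 :=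
  derivsVanish_aeval id 1 (fun i j => by rcases eq_or_ne j i with rfl | hj <;> simp [*])
    (by simpa)

lemma derivsVanish_aeval_C_mul_X {f : MvPolynomial (Fin N) ℂ} {z : Fin N → ℂ}
    (h : derivsVanish f d z) : derivsVanish (aeval (fun j => C (z j) * X j) f) d 1 :=
  derivsVanish_aeval id z (fun i j => by rcases eq_or_ne j i with rfl | hj <;> simp [*])
    (by simpa)

lemma derivsVanish_aeval_cons_one_X {f : MvPolynomial (Fin (N + 1)) ℂ} {t : Fin N → ℂ}
    (h : derivsVanish f d (Fin.cons 1 t)) :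
    derivsVanish (aeval (Fin.cons 1 X : Fin (N + 1) → MvPolynomial (Fin N) ℂ) f) d t := by
  refine derivsVanish_aeval Fin.succ 1 (fun i j => ?_) ?_
  · refine Fin.cases ?_ (fun j => ?_) j <;> simp [pderiv_X, Pi.single_apply, eq_comm]
  · convert h using 1
    ext j
    refine Fin.cases ?_ (fun j => ?_) j <;> simp

lemma derivsVanish_rootsOfUnityAverage {k : ℕ} {ζ : ℂ} (hζ : IsPrimitiveRoot ζ k)
    (a : Fin N → ℕ) {g : MvPolynomial (Fin N) ℂ}
    (h : ∀ t : Fin N → ℂ, (∀ j, t j ^ k = 1) → derivsVanish g d t) :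
    derivsVanish (rootsOfUnityAverage ζ k a g) d 1 :=
  derivsVanish_sum_smul _ _ fun c _ => derivsVanish_aeval_C_mul_X
    (h _ fun j => by rw [← pow_mul, mul_comm, pow_mul, hζ.pow_eq_one, one_pow])

lemma mem_pow_idealOfVars_of_derivsVanish_zero {f : MvPolynomial (Fin N) ℂ}
    (h : derivsVanish f d 0) : f ∈ idealOfVars (Fin N) ℂ ^ (d + 1) := by
  rw [mem_pow_idealOfVars_iff']
  intro e he
  have hL := (derivsVanish_iff f d 0).1 h (Finsupp.toMultiset e).toList
    (by rw [Multiset.length_toList, Finsupp.card_toMultiset]; exact Nat.lt_succ_iff.mp he)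
  rwa [eval_zero, constantCoeff_eq, coeff_iteratedPDeriv_eq_zero_iff, zero_add,
    Multiset.coe_toList, Finsupp.toMultiset_toFinsupp] at hL

lemma aeval_X_add_C_mem_pow_idealOfVars {f : MvPolynomial (Fin N) ℂ} {p : Fin N → ℂ}
    (h : derivsVanish f d p) :
    aeval (fun j => X j + C (p j)) f ∈ idealOfVars (Fin N) ℂ ^ (d + 1) :=
  mem_pow_idealOfVars_of_derivsVanish_zero (derivsVanish_aeval_X_add_C h)

theorem eq_zero_of_derivsVanish_one_monomial_mul_expand {k : ℕ} (hk : k ≠ 0)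
    (a : Fin N →₀ ℕ) {G : MvPolynomial (Fin N) ℂ}
    (hdeg : (monomial a 1 * expand k G).totalDegree < k * (d + 1))
    (h : derivsVanish (monomial a 1 * expand k G) d 1) : G = 0 := by
  by_contra hG
  set G₁ := aeval (fun j => X j + 1 : Fin N → MvPolynomial (Fin N) ℂ) G
  have hG₁ : G₁ ≠ 0 := fun h0 => hG <| by
    have hinv := congr_arg (aeval (fun j => X j - 1 : Fin N → MvPolynomial (Fin N) ℂ)) h0
    simpa only [G₁, comp_aeval_apply, map_add, aeval_X, map_one, sub_add_cancel,
      aeval_X_left_apply, map_zero] using hinv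
  have hGd : G.totalDegree ≤ d := by
    rw [totalDegree_mul_of_isDomain (by simp) ((expand_ne_zero (Nat.pos_of_ne_zero hk)).2 hG),
      totalDegree_expand] at hdeg
    exact Nat.lt_succ_iff.1 (Nat.lt_of_mul_lt_mul_right (a := k) (by linarith))
  obtain ⟨m, hmG₁, hmem, hne⟩ := exists_mem_pow_idealOfVars_homogeneousComponent_ne_zero hG₁
  have hm : m < d + 1 := by
    have : G₁.totalDegree ≤ G.totalDegree :=
      totalDegree_aeval_le (fun j => (totalDegree_add _ _).trans (by simp)) G
    omega
  have hvanish := homogeneousComponent_eq_zero_of_mem_pow hm (aeval_X_add_C_mem_pow_idealOfVars h)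
  simp only [Pi.one_apply, map_one] at hvanish
  rw [homogeneousComponent_aeval_X_add_one_monomial_mul_expand a k hmem,
    aeval_C_mul_X_eq_zero_iff fun _ => Nat.cast_ne_zero.2 hk] at hvanish
  exact hne hvanish

theorem eq_zero_of_derivsVanish_of_pow_eq_one {k : ℕ} (hk : k ≠ 0)
    {g : MvPolynomial (Fin N) ℂ} (hdeg : g.totalDegree < k * (d + 1))
    (h : ∀ t : Fin N → ℂ, (∀ j, t j ^ k = 1) → derivsVanish g d t) : g = 0 := by
  ext e₀
  have hζ := Complex.isPrimitiveRoot_exp k hk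
  set H := rootsOfUnityAverage (Complex.exp (2 * Real.pi * Complex.I / k)) k e₀ g
  have hH : ∀ e, coeff e H = _ := coeff_rootsOfUnityAverage hζ e₀ g
  have hsupp : ∀ e ∈ H.support, (∀ i, e i ≡ e₀ i [MOD k]) ∧ e ∈ g.support := fun e he => by
    rw [mem_support_iff, hH] at he
    split_ifs at he with hmod
    · exact ⟨hmod, mem_support_iff.2 (right_ne_zero_of_mul he)⟩
    · exact absurd rfl he
  obtain ⟨r, G, hHG⟩ := exists_eq_monomial_mul_expand_of_modEq e₀ fun e he => (hsupp e he).1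
  have hdegH : H.totalDegree < k * (d + 1) :=
    (totalDegree_le_of_support_subset fun e he => (hsupp e he).2).trans_lt hdeg
  have hvanH : derivsVanish H d 1 := derivsVanish_rootsOfUnityAverage hζ e₀ h
  rw [hHG] at hdegH hvanH
  have hcoeff := hH e₀
  rw [hHG, eq_zero_of_derivsVanish_one_monomial_mul_expand hk r hdegH hvanH, map_zero, mul_zero,
    coeff_zero, if_pos fun i => Nat.ModEq.refl _] at hcoeff
  exact (mul_eq_zero.1 hcoeff.symm).resolve_left (pow_ne_zero _ (Nat.cast_ne_zero.2 hk))

end DerivsVanish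

theorem form_vanishing_at_roots_of_unity_points_general (n k d : ℕ) (hk : 2 ≤ k)
    (f : MvPolynomial (Fin (n + 1)) ℂ) (hf : f.IsHomogeneous (k * d + k - 1))
    (h : ∀ t : Fin n → ℂ, (∀ j, t j ^ k = 1) → derivsVanish f d (Fin.cons 1 t)) :
    f = 0 := by
  refine hf.eq_zero_of_aeval_cons_one_X_eq_zero (eq_zero_of_derivsVanish_of_pow_eq_one
    (by omega) ?_ fun t ht => derivsVanish_aeval_cons_one_X (h t ht))
  have hX : ∀ i, ((Fin.cons 1 X : Fin (n + 1) → MvPolynomial (Fin n) ℂ) i).totalDegree ≤ 1 :=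
    Fin.cases (by simp) fun i => by simp
  calc _ ≤ f.totalDegree := totalDegree_aeval_le hX f
    _ ≤ k * d + k - 1 := hf.totalDegree_le
    _ < k * (d + 1) := by rw [Nat.mul_succ]; omega

/-- Let `k ≥ 2` and `n ≥ 1`. Any form of degree `kd + k - 1` in `n+1` complex variables
all of whose partial derivatives of order `≤ d` vanish at each of the `k^n` points
`(1, ξ_{i₁}, …, ξ_{iₙ})` (the `ξ`'s ranging over all `k`-th roots of unity) is zero. -/
theorem form_vanishing_at_roots_of_unity_points (n k d : ℕ) (hn : 1 ≤ n) (hk : 2 ≤ k)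
    (f : MvPolynomial (Fin (n + 1)) ℂ) (hf : f.IsHomogeneous (k * d + k - 1))
    (h : ∀ t : Fin n → ℂ, (∀ j, t j ^ k = 1) → derivsVanish f d (Fin.cons 1 t)) :
    f = 0 :=
  form_vanishing_at_roots_of_unity_points_general n k d hk f hf h
end

section
/- Let g₁, …, g_p be forms of degree d in ℂ[x₀, …, xₙ]. The image of the map (f₁, …, f_p) ↦ Σ g_i^{k-1} f_i (with f_i of degree d) equals the span of the tangent spaces at g_i^k to the variety of k-th powers in S^{kd}; in particular, if the ideal generated by g₁^{k-1}, …, g_p^{k-1} contains all of S^{kd}, then the set of sums of p k-th powers of degree-d forms is Zariski dense in S^{kd}. -/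
/-!
Part (i) describes a sum of images of linear maps. For (ii), put `a = ∑ gᵢᵏ` and let `T` be a
formal parameter. The ideal hypothesis says, degree by degree, that the differential
`e ↦ k ∑ gᵢ^(k-1) eᵢ` of `h ↦ ∑ hᵢᵏ` at `g` maps onto the forms of degree `kd`. Newton's method
then lifts the `gᵢ` to forms `Gᵢ` of degree `d` over `ℂ[T]` with
`∑ Gᵢᵏ ≡ a + T (f - a) mod T^(N+1)`. A polynomial `P` on the coefficients that vanishes on sums
of `k`-th powers vanishes at every specialization `T = t` of `∑ Gᵢᵏ`, hence identically in `T`.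
So `P(a + T (f - a))`, a polynomial of degree at most `N = deg P` in `T`, is divisible by
`T^(N+1)`, hence zero, and `T = 1` gives `P(f) = 0`.
-/

open MvPolynomial
open scoped Polynomial

theorem Submodule.coe_iSup_map_eq_setOf_sum {R M N ι : Type*} [Semiring R] [AddCommMonoid M]
    [AddCommMonoid N] [Module R M] [Module R N] [Fintype ι] (φ : ι → M →ₗ[R] N)
    (V : Submodule R M) :
    ↑(⨆ i, V.map (φ i)) = {q | ∃ f : ι → M, (∀ i, f i ∈ V) ∧ q = ∑ i, φ i (f i)} := by
  ext q
  have hfin : (⨆ i, V.map (φ i)) = ⨆ i ∈ Finset.univ, V.map (φ i) := by simp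
  rw [SetLike.mem_coe, hfin, Submodule.mem_iSup_finset_iff_exists_sum]
  constructor
  · rintro ⟨μ, rfl⟩
    choose f hf hφ using fun i => (μ i).2
    exact ⟨f, hf, by simp [hφ]⟩
  · rintro ⟨f, hf, rfl⟩
    exact ⟨fun i => ⟨φ i (f i), mem_map_of_mem (hf i)⟩, rfl⟩

theorem DirectSum.exists_sum_mul_eq_of_mem_span {ι A S : Type*} [CommRing A] [SetLike S A]
    [AddSubmonoidClass S A] (𝒜 : ℕ → S) [GradedRing 𝒜] [Fintype ι] {c : ι → A} {e m : ℕ}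
    (hc : ∀ i, c i ∈ 𝒜 e) {q : A} (hq : q ∈ 𝒜 (m + e)) (hspan : q ∈ Ideal.span (Set.range c)) :
    ∃ f : ι → A, (∀ i, f i ∈ 𝒜 m) ∧ ∑ i, c i * f i = q := by
  obtain ⟨a, rfl⟩ := (Submodule.mem_span_range_iff_exists_fun A).1 hspan
  refine ⟨fun i => decompose 𝒜 (a i) m, fun i => (decompose 𝒜 (a i) m).2, ?_⟩
  calc ∑ i, c i * decompose 𝒜 (a i) m
      = ∑ i, (decompose 𝒜 (a i * c i) (m + e) : A) := by
        refine Finset.sum_congr rfl fun i _ => ?_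
        rw [coe_decompose_mul_of_right_mem_of_le 𝒜 (hc i) (Nat.le_add_left e m),
          Nat.add_sub_cancel, mul_comm]
    _ = decompose 𝒜 (∑ i, a i • c i) (m + e) := by simp [decompose_sum]
    _ = ∑ i, a i • c i := decompose_of_mem_same 𝒜 hq

@[simp]
theorem Polynomial.evalRingHom_comp_C {R : Type*} [CommSemiring R] (r : R) :
    (Polynomial.evalRingHom r).comp Polynomial.C = RingHom.id R := by
  ext; simp

namespace MvPolynomial

theorem IsHomogeneous.of_C_mul {σ R : Type*} [CommSemiring R] {r : R} (hr : IsLeftRegular r)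
    {p : MvPolynomial σ R} {n : ℕ} (h : (C r * p).IsHomogeneous n) : p.IsHomogeneous n :=
  fun μ hμ => h (by rwa [coeff_C_mul, Ne, hr.mul_left_eq_zero_iff])

theorem C_X_dvd_iff_map_evalRingHom_zero {σ R : Type*} [CommRing R] {p : MvPolynomial σ R[X]} :
    C Polynomial.X ∣ p ↔ map (Polynomial.evalRingHom 0) p = 0 := by
  simp [C_dvd_iff_dvd_coeff, Polynomial.X_dvd_iff, MvPolynomial.ext_iff, coeff_map,
    Polynomial.coeff_zero_eq_eval_zero]

theorem eval_aeval_coeff {σ R : Type*} [CommRing R] (P : MvPolynomial (σ →₀ ℕ) R)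
    (Φ : MvPolynomial σ R[X]) (t : R) :
    (aeval (fun μ => Φ.coeff μ) P).eval t = eval (map (Polynomial.evalRingHom t) Φ).coeff P := by
  rw [← Polynomial.coe_evalRingHom, map_aeval]
  simp only [Polynomial.algebraMap_eq, Polynomial.evalRingHom_comp_C, coeff_map]
  rfl

theorem aeval_sub_aeval_mem {σ R A : Type*} [CommRing R] [CommRing A] [Algebra R A]
    {I : Ideal A} {c c' : σ → A} (h : ∀ i, c i - c' i ∈ I) (P : MvPolynomial σ R) :
    aeval c P - aeval c' P ∈ I := by
  rw [← Ideal.Quotient.eq, map_aeval, map_aeval]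
  congr 2
  exact _root_.funext fun i => Ideal.Quotient.eq.2 (h i)

theorem aeval_eq_zero_of_X_pow_dvd_sub {σ R : Type*} [CommRing R] [IsDomain R]
    (P : MvPolynomial σ R) {c c' : σ → R[X]} (hc : ∀ i, (c i).natDegree ≤ 1)
    (hdvd : ∀ i, Polynomial.X ^ (P.totalDegree + 1) ∣ c i - c' i) (h' : aeval c' P = 0) :
    aeval c P = 0 := by
  have hmem := aeval_sub_aeval_mem (I := Ideal.span {Polynomial.X ^ (P.totalDegree + 1)})
    (fun i => Ideal.mem_span_singleton.2 (hdvd i)) P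
  rw [h', sub_zero, Ideal.mem_span_singleton] at hmem
  refine Polynomial.eq_zero_of_dvd_of_natDegree_lt hmem ?_
  have := aeval_natDegree_le P le_rfl c hc
  rw [Polynomial.natDegree_X_pow]
  omega

section SumOfPowers

variable {σ ι R : Type*} [CommRing R] [Fintype ι] {k d : ℕ} {g : ι → MvPolynomial σ R}

def SumPowDifferentialSurjective (k d : ℕ) (g : ι → MvPolynomial σ R) : Prop :=
  ∀ w : MvPolynomial σ R, w.IsHomogeneous (k * d) →
    ∃ e : ι → MvPolynomial σ R, (∀ i, (e i).IsHomogeneous d) ∧ ∑ i, k * g i ^ (k - 1) * e i = w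

theorem sumPowDifferentialSurjective_of_forall_mem_span {K : Type*} [Field K]
    {g : ι → MvPolynomial σ K} (hk : (k : K) ≠ 0) (hg : ∀ i, (g i).IsHomogeneous d)
    (hspan : ∀ q : MvPolynomial σ K, q.IsHomogeneous (k * d) →
      q ∈ Ideal.span (Set.range fun i => g i ^ (k - 1))) :
    SumPowDifferentialSurjective k d g := by
  intro w hw
  have hkd : k * d = d + (k - 1) * d := by
    have hk1 : k ≠ 0 := by rintro rfl; exact hk Nat.cast_zero
    nth_rewrite 1 [show k = k - 1 + 1 by omega]
    ring
  let := MvPolynomial.gradedAlgebra (σ := σ) (R := K)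
  obtain ⟨e, he, hsum⟩ := DirectSum.exists_sum_mul_eq_of_mem_span (homogeneousSubmodule σ K)
    (fun i => mul_comm d (k - 1) ▸ (hg i).pow (k - 1)) (hkd ▸ hw.C_mul (k : K)⁻¹)
    (Ideal.mul_mem_left _ _ (hspan w hw))
  refine ⟨e, he, ?_⟩
  simp_rw [mul_assoc, ← Finset.mul_sum, hsum, ← map_natCast C, ← mul_assoc, ← map_mul,
    mul_inv_cancel₀ hk, map_one, one_mul]

/-- One Newton step: the correction `T^(m+1) eᵢ` with `k ∑ gᵢ^(k-1) eᵢ ≡ ρ mod T` removes the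
error `T^(m+1) ρ`, up to terms divisible by `T^(2m+2)`. -/
theorem exists_sum_pow_lift_succ (hsurj : SumPowDifferentialSurjective k d g)
    {Φ : MvPolynomial σ R[X]} (hΦ : Φ.IsHomogeneous (k * d)) {m : ℕ}
    {G : ι → MvPolynomial σ R[X]} (hG : ∀ i, (G i).IsHomogeneous d)
    (hG0 : ∀ i, map (Polynomial.evalRingHom 0) (G i) = g i)
    (hdvd : C (Polynomial.X ^ (m + 1)) ∣ Φ - ∑ i, G i ^ k) :
    ∃ G' : ι → MvPolynomial σ R[X], (∀ i, (G' i).IsHomogeneous d) ∧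
      (∀ i, map (Polynomial.evalRingHom 0) (G' i) = g i) ∧
      C (Polynomial.X ^ (m + 2)) ∣ Φ - ∑ i, G' i ^ k := by
  obtain ⟨ρ, hρ⟩ := hdvd
  have hρhom : ρ.IsHomogeneous (k * d) := by
    refine IsHomogeneous.of_C_mul (Polynomial.isRegular_X_pow (R := R) (m + 1)).left ?_
    rw [← hρ]
    exact hΦ.sub (IsHomogeneous.sum _ _ _ fun i _ => mul_comm d k ▸ (hG i).pow k)
  obtain ⟨e, he, hesum⟩ := hsurj _ (hρhom.map (Polynomial.evalRingHom 0))
  set Δ : ι → MvPolynomial σ R[X] := fun i => C (Polynomial.X ^ (m + 1)) * map Polynomial.C (e i)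
  refine ⟨fun i => G i + Δ i, fun i => ?_, fun i => ?_, ?_⟩
  · have hΔ : (Δ i).IsHomogeneous (0 + d) := (isHomogeneous_C _ _).mul ((he i).map _)
    exact (hG i).add (by rwa [zero_add] at hΔ)
  · simp [Δ, hG0, map_map]
  beta_reduce
  have hquad (i : ι) : C (Polynomial.X ^ (m + 2)) ∣
      (G i + Δ i) ^ k - G i ^ (k - 1) * Δ i * (k : MvPolynomial σ R[X]) - G i ^ k := by
    refine dvd_trans ?_ (sq_dvd_add_pow_sub_sub _ _ _)
    rw [mul_pow, ← map_pow, ← pow_mul]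
    exact (map_dvd C (pow_dvd_pow _ (by omega))).mul_right _
  have hlin : C Polynomial.X ∣ ρ - ∑ i, k * G i ^ (k - 1) * map Polynomial.C (e i) := by
    rw [C_X_dvd_iff_map_evalRingHom_zero]
    simp [hG0, map_map, map_id, ← hesum]
  have hsplit : Φ - ∑ i, (G i + Δ i) ^ k =
      C (Polynomial.X ^ (m + 1)) * (ρ - ∑ i, k * G i ^ (k - 1) * map Polynomial.C (e i)) -
        ∑ i, ((G i + Δ i) ^ k - G i ^ (k - 1) * Δ i * k - G i ^ k) := by
    have hΔsum : ∑ i, G i ^ (k - 1) * Δ i * k =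
        C (Polynomial.X ^ (m + 1)) * ∑ i, k * G i ^ (k - 1) * map Polynomial.C (e i) := by
      rw [Finset.mul_sum]
      exact Finset.sum_congr rfl fun i _ => by ring
    rw [Finset.sum_sub_distrib, Finset.sum_sub_distrib, hΔsum]
    linear_combination hρ
  rw [hsplit]
  refine dvd_sub ?_ (Finset.dvd_sum fun i _ => hquad i)
  rw [pow_succ, map_mul]
  exact mul_dvd_mul_left _ hlin

theorem exists_sum_pow_lift (hg : ∀ i, (g i).IsHomogeneous d)
    (hsurj : SumPowDifferentialSurjective k d g) {Φ : MvPolynomial σ R[X]}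
    (hΦ : Φ.IsHomogeneous (k * d)) (hΦ0 : map (Polynomial.evalRingHom 0) Φ = ∑ i, g i ^ k)
    (m : ℕ) :
    ∃ G : ι → MvPolynomial σ R[X], (∀ i, (G i).IsHomogeneous d) ∧
      (∀ i, map (Polynomial.evalRingHom 0) (G i) = g i) ∧
      C (Polynomial.X ^ (m + 1)) ∣ Φ - ∑ i, G i ^ k := by
  induction m with
  | zero =>
    refine ⟨fun i => map Polynomial.C (g i), fun i => (hg i).map _, fun i => ?_, ?_⟩
    · simp [map_map, map_id]
    · rw [zero_add, pow_one, C_X_dvd_iff_map_evalRingHom_zero]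
      simp [hΦ0, map_map, map_id]
  | succ m ih =>
    obtain ⟨G, hG, hG0, hdvd⟩ := ih
    exact exists_sum_pow_lift_succ hsurj hΦ hG hG0 hdvd

theorem eval_coeff_eq_zero_of_sumPowDifferentialSurjective [IsDomain R] [Infinite R]
    (hg : ∀ i, (g i).IsHomogeneous d) (hsurj : SumPowDifferentialSurjective k d g)
    (P : MvPolynomial (σ →₀ ℕ) R)
    (hP : ∀ h : ι → MvPolynomial σ R, (∀ i, (h i).IsHomogeneous d) →
      eval (∑ i, h i ^ k).coeff P = 0)
    {f : MvPolynomial σ R} (hf : f.IsHomogeneous (k * d)) :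
    eval f.coeff P = 0 := by
  set a := ∑ i, g i ^ k
  set Φ : MvPolynomial σ R[X] := map Polynomial.C a + C Polynomial.X * map Polynomial.C (f - a)
  have ha : a.IsHomogeneous (k * d) :=
    IsHomogeneous.sum _ _ _ fun i _ => mul_comm d k ▸ (hg i).pow k
  have hΦ : Φ.IsHomogeneous (k * d) := by
    have hT : (C Polynomial.X * map Polynomial.C (f - a)).IsHomogeneous (0 + k * d) :=
      (isHomogeneous_C _ _).mul ((hf.sub ha).map _)
    exact (ha.map _).add (by rwa [zero_add] at hT)
  have hΦ0 : map (Polynomial.evalRingHom 0) Φ = a := by simp [Φ, map_map, map_id]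
  obtain ⟨G, hG, -, hdvd⟩ := exists_sum_pow_lift hg hsurj hΦ hΦ0 P.totalDegree
  have hQ : aeval (fun μ => (∑ i, G i ^ k).coeff μ) P = 0 := Polynomial.funext fun t => by
    simpa [eval_aeval_coeff] using
      hP (fun i => map (Polynomial.evalRingHom t) (G i)) fun i => (hG i).map _
  have hS : aeval (fun μ => Φ.coeff μ) P = 0 := by
    refine aeval_eq_zero_of_X_pow_dvd_sub P (fun μ => ?_) (fun μ => ?_) hQ
    · simp only [Φ, coeff_add, coeff_C_mul, coeff_map]
      compute_degree
    · simpa using (C_dvd_iff_dvd_coeff _ _).1 hdvd μ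
  have hΦ1 : map (Polynomial.evalRingHom 1) Φ = f := by simp [Φ, map_map, map_id]
  rw [← hΦ1, ← eval_aeval_coeff, hS, Polynomial.eval_zero]

end SumOfPowers

end MvPolynomial

theorem terracini_span_and_density_general (n k d p : ℕ) (hk : 2 ≤ k)
    (g : Fin p → MvPolynomial (Fin (n + 1)) ℂ) (hg : ∀ i, (g i).IsHomogeneous d) :
    ({q : MvPolynomial (Fin (n + 1)) ℂ |
        ∃ f : Fin p → MvPolynomial (Fin (n + 1)) ℂ,
          (∀ i, (f i).IsHomogeneous d) ∧ q = ∑ i, g i ^ (k - 1) * f i} =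
      ↑(⨆ i : Fin p, Submodule.map (LinearMap.mulLeft ℂ (g i ^ (k - 1)))
          (MvPolynomial.homogeneousSubmodule (Fin (n + 1)) ℂ d))) ∧
    ((∀ q : MvPolynomial (Fin (n + 1)) ℂ, q.IsHomogeneous (k * d) →
        q ∈ Ideal.span (Set.range fun i : Fin p => g i ^ (k - 1))) →
      ∀ P : MvPolynomial ((Fin (n + 1)) →₀ ℕ) ℂ,
        (∀ h : Fin p → MvPolynomial (Fin (n + 1)) ℂ, (∀ i, (h i).IsHomogeneous d) →
          MvPolynomial.eval (∑ i, h i ^ k).coeff P = 0) →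
        ∀ f : MvPolynomial (Fin (n + 1)) ℂ, f.IsHomogeneous (k * d) →
          MvPolynomial.eval f.coeff P = 0) := by
  refine ⟨?_, fun hspan P hP f hf => ?_⟩
  · rw [Submodule.coe_iSup_map_eq_setOf_sum]
    simp [mem_homogeneousSubmodule]
  have hk0 : (k : ℂ) ≠ 0 := Nat.cast_ne_zero.2 (by omega)
  exact eval_coeff_eq_zero_of_sumPowDifferentialSurjective hg
    (sumPowDifferentialSurjective_of_forall_mem_span hk0 hg hspan) P hP hf

/-- Let `g₁, …, g_p` be forms of degree `d`.  (i) The image of the map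
`(f₁, …, f_p) ↦ Σ gᵢ^{k-1} fᵢ` (with the `fᵢ` forms of degree `d`) equals the span of
the tangent spaces `{gᵢ^{k-1}·f : f ∈ S^d}` at the points `gᵢ^k` of the variety of
`k`-th powers.  (ii) In particular, if the ideal generated by `g₁^{k-1}, …, g_p^{k-1}`
contains all forms of degree `kd`, then the set of sums of `p` `k`-th powers of
degree-`d` forms is Zariski dense in `S^{kd}`: every polynomial function on the
coefficients vanishing on all such sums vanishes on every form of degree `kd`. -/
theorem terracini_span_and_density (n k d p : ℕ) (hn : 1 ≤ n) (hk : 2 ≤ k) (hd : 1 ≤ d)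
    (g : Fin p → MvPolynomial (Fin (n + 1)) ℂ) (hg : ∀ i, (g i).IsHomogeneous d) :
    ({q : MvPolynomial (Fin (n + 1)) ℂ |
        ∃ f : Fin p → MvPolynomial (Fin (n + 1)) ℂ,
          (∀ i, (f i).IsHomogeneous d) ∧ q = ∑ i, g i ^ (k - 1) * f i} =
      ↑(⨆ i : Fin p, Submodule.map (LinearMap.mulLeft ℂ (g i ^ (k - 1)))
          (MvPolynomial.homogeneousSubmodule (Fin (n + 1)) ℂ d))) ∧
    ((∀ q : MvPolynomial (Fin (n + 1)) ℂ, q.IsHomogeneous (k * d) →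
        q ∈ Ideal.span (Set.range fun i : Fin p => g i ^ (k - 1))) →
      ∀ P : MvPolynomial ((Fin (n + 1)) →₀ ℕ) ℂ,
        (∀ h : Fin p → MvPolynomial (Fin (n + 1)) ℂ, (∀ i, (h i).IsHomogeneous d) →
          MvPolynomial.eval (∑ i, h i ^ k).coeff P = 0) →
        ∀ f : MvPolynomial (Fin (n + 1)) ℂ, f.IsHomogeneous (k * d) →
          MvPolynomial.eval f.coeff P = 0) :=
  terracini_span_and_density_general n k d p hk g hg
end
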